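/- Let n ≥ 0 and let X be a Boolean space. For f ∈ λ_n(X) define f̂ : X → {0,1} by f̂(x) = 1 if f(x) ≠ 0 and f̂(x) = 0 otherwise. Then f̂ ∈ λ_0(X); the map λ_n(X) → λ_0(X), f ↦ f̂, is surjective and preserves the pointwise operations ∧, ∨ and \; and for f, g ∈ λ_n(X) one has f̂ = ĝ if and only if f∧g = f and g∧f = g. (Thus f ↦ f̂ induces an isomorphism of the maximal Boolean algebra image λ_n(X)/D onto the Boolean algebra λ_0(X) = X*.) -/
import Mathlib


open TopologicalSpace

namespace SkewPaper

/-- The meet operation of the primitive left-handed skew Boolean algebra `n+2` on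
`{0,1,…,n+1}`: `x ∧ y = 0` if `x = 0` or `y = 0`, and `x ∧ y = x` otherwise. -/
def pw {n : ℕ} (x y : Fin (n+2)) : Fin (n+2) := if x = 0 ∨ y = 0 then 0 else x

/-- The join operation of `n+2`: `x ∨ y = x` if `y = 0`, and `x ∨ y = y` otherwise. -/
def pv {n : ℕ} (x y : Fin (n+2)) : Fin (n+2) := if y = 0 then x else y

/-- The relative complement of `n+2`: `x \ y = x` if `y = 0`, and `x \ y = 0` otherwise. -/
def pd {n : ℕ} (x y : Fin (n+2)) : Fin (n+2) := if y = 0 then x else 0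

/-- A left-handed skew Boolean algebra structure on `S`.  Membership of `y` in the principal
subalgebra `⌈x⌉ = {y : x∧y = y∧x = y}` is written out as the two equations
`wedge x y = y` and `wedge y x = y`. -/
structure SkewBA (S : Type*) where
  wedge : S → S → S
  vee : S → S → S
  sdiff : S → S → S
  zero : S
  wedge_assoc : ∀ x y z, wedge (wedge x y) z = wedge x (wedge y z)
  vee_assoc : ∀ x y z, vee (vee x y) z = vee x (vee y z)
  wedge_idem : ∀ x, wedge x x = x
  vee_idem : ∀ x, vee x x = x
  absorb₁ : ∀ x y, wedge x (vee x y) = x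
  absorb₂ : ∀ x y, vee x (wedge x y) = x
  absorb₃ : ∀ x y, wedge (vee y x) x = x
  absorb₄ : ∀ x y, vee (wedge y x) x = x
  left_wedge : ∀ x y, wedge (wedge x y) x = wedge x y
  left_vee : ∀ x y, vee (vee x y) x = vee y x
  symmetric : ∀ x y, wedge x y = wedge y x ↔ vee x y = vee y x
  wedge_zero : ∀ x, wedge x zero = zero
  zero_wedge : ∀ x, wedge zero x = zero
  /-- `⌈x⌉` is closed under `∧`. -/
  princ_wedge_closed : ∀ x y z, wedge x y = y → wedge y x = y → wedge x z = z → wedge z x = z →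
    wedge x (wedge y z) = wedge y z ∧ wedge (wedge y z) x = wedge y z
  /-- `⌈x⌉` is closed under `∨`. -/
  princ_vee_closed : ∀ x y z, wedge x y = y → wedge y x = y → wedge x z = z → wedge z x = z →
    wedge x (vee y z) = vee y z ∧ wedge (vee y z) x = vee y z
  /-- `∧` is commutative on `⌈x⌉` (with `∨` commutative as well, by `symmetric`),
  so `⌈x⌉` is a lattice with bottom `0` and top `x`. -/
  princ_comm : ∀ x y z, wedge x y = y → wedge y x = y → wedge x z = z → wedge z x = z →
    wedge y z = wedge z y
  /-- The lattice `⌈x⌉` is distributive. -/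
  princ_distrib : ∀ x a b c, wedge x a = a → wedge a x = a → wedge x b = b → wedge b x = b →
    wedge x c = c → wedge c x = c → wedge a (vee b c) = vee (wedge a b) (wedge a c)
  /-- `x \ y` lies in `⌈x⌉`. -/
  sdiff_mem : ∀ x y, wedge x (sdiff x y) = sdiff x y ∧ wedge (sdiff x y) x = sdiff x y
  /-- `x \ y` is a complement of `x ∧ y` in `⌈x⌉`: their meet is `0` … -/
  sdiff_compl_bot : ∀ x y, wedge (wedge x y) (sdiff x y) = zero
  /-- … and their join is `x`. -/
  sdiff_compl_top : ∀ x y, vee (wedge x y) (sdiff x y) = x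

/-- `h : S → {0,…,n+1}` is a homomorphism to the primitive algebra `n+2`. -/
def IsHomTo {S : Type*} (n : ℕ) (A : SkewBA S) (h : S → Fin (n+2)) : Prop :=
  (∀ x y, h (A.wedge x y) = pw (h x) (h y)) ∧
  (∀ x y, h (A.vee x y) = pv (h x) (h y)) ∧
  (∀ x y, h (A.sdiff x y) = pd (h x) (h y)) ∧
  h A.zero = 0

/-- `Λ_n(S)`: the nonzero homomorphisms `S → n+2`, topologized as a subspace of the
product space `{0,…,n+1}^S` (each factor discrete). -/
abbrev Lambda {S : Type*} (n : ℕ) (A : SkewBA S) : Type _ :=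
  {h : S → Fin (n+2) // IsHomTo n A h ∧ ∃ s, h s ≠ 0}

/-- Membership in `λ_n(X)`: `f` is continuous and `f⁻¹(i)` is compact for `i ∈ {1,…,n+1}`. -/
def MemLam (n : ℕ) {X : Type*} [TopologicalSpace X] (f : X → Fin (n+2)) : Prop :=
  Continuous f ∧ ∀ i : Fin (n+2), i ≠ 0 → IsCompact (f ⁻¹' {i})

/-- `λ_n(X)` as a type. -/
abbrev Lam (n : ℕ) (X : Type*) [TopologicalSpace X] : Type _ :=
  {f : X → Fin (n+2) // MemLam n f}

/-- A Boolean space: Hausdorff, and the compact open sets form a base of the topology. -/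
def IsBooleanSpace (X : Type*) [TopologicalSpace X] : Prop :=
  T2Space X ∧ IsTopologicalBasis {U : Set X | IsCompact U ∧ IsOpen U}

/-- A map is proper if preimages of compact sets are compact. -/
def PreimageCompact {X Y : Type*} [TopologicalSpace X] [TopologicalSpace Y] (g : X → Y) : Prop :=
  ∀ K : Set Y, IsCompact K → IsCompact (g ⁻¹' K)


/-- `f̂ : X → {0,1}`, `f̂(x) = 1` iff `f(x) ≠ 0`. -/
def hat (n : ℕ) {X : Type*} (f : X → Fin (n+2)) : X → Fin (0+2) :=
  fun x => if f x = 0 then 0 else 1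

/-- `f ↦ f̂` maps `λ_n(X)` onto `λ_0(X)`, preserves the pointwise operations
`∧`, `∨`, `\`, and identifies `f̂ = ĝ` with `f D g` (i.e. `f∧g = f` and `g∧f = g`);
so it induces an isomorphism `λ_n(X)/D ≃ λ_0(X) = X*`. -/
theorem stmt15 (n : ℕ) {X : Type*} [TopologicalSpace X] (hX : IsBooleanSpace X) :
    (∀ f : X → Fin (n+2), MemLam n f → MemLam 0 (hat n f)) ∧
    (∀ h : X → Fin (0+2), MemLam 0 h → ∃ f : X → Fin (n+2), MemLam n f ∧ hat n f = h) ∧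
    (∀ f g : X → Fin (n+2),
      hat n (fun x => pw (f x) (g x)) = fun x => pw (hat n f x) (hat n g x)) ∧
    (∀ f g : X → Fin (n+2),
      hat n (fun x => pv (f x) (g x)) = fun x => pv (hat n f x) (hat n g x)) ∧
    (∀ f g : X → Fin (n+2),
      hat n (fun x => pd (f x) (g x)) = fun x => pd (hat n f x) (hat n g x)) ∧
    (∀ f g : X → Fin (n+2), MemLam n f → MemLam n g →
      (hat n f = hat n g ↔
        ((fun x => pw (f x) (g x)) = f ∧ (fun x => pw (g x) (f x)) = g))) := by
  have h10 : (1 : Fin (n+2)) ≠ 0 := by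
    simp [Fin.ext_iff]
  have h10' : (1 : Fin (0+2)) ≠ 0 := by decide
  refine ⟨?_, ?_, ?_, ?_, ?_, ?_⟩
  · -- hat preserves MemLam
    intro f hf
    constructor
    · exact (continuous_of_discreteTopology
        (f := fun y : Fin (n+2) => if y = 0 then (0 : Fin (0+2)) else 1)).comp hf.1
    · intro i hi
      have hi1 : i = 1 := by omega
      have heq : (hat n f) ⁻¹' {i} =
          ⋃ j ∈ (Finset.univ.filter (fun j : Fin (n+2) => j ≠ 0)), f ⁻¹' {j} := by
        ext x
        simp only [hat, hi1, Set.mem_preimage, Set.mem_singleton_iff, Set.mem_iUnion,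
          Finset.mem_filter, Finset.mem_univ, true_and]
        by_cases h : f x = 0 <;> simp [h, h10', Ne.symm h10']

      rw [heq]
      exact (Finset.univ.filter (fun j : Fin (n+2) => j ≠ 0)).finite_toSet.isCompact_biUnion
        (fun j hj => hf.2 j (by simpa using hj))
  · -- surjectivity
    intro h hh
    have hx1 : ∀ x, h x ≠ 0 → h x = 1 := fun x hx => by omega
    refine ⟨fun x => if h x = 0 then 0 else 1, ⟨?_, ?_⟩, ?_⟩
    · exact (continuous_of_discreteTopology
        (f := fun y : Fin (0+2) => if y = 0 then (0 : Fin (n+2)) else 1)).comp hh.1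
    · intro i hi
      by_cases hi1 : i = 1
      · have heq : (fun x => if h x = 0 then (0 : Fin (n+2)) else 1) ⁻¹' {i} = h ⁻¹' {1} := by
          ext x
          simp only [Set.mem_preimage, Set.mem_singleton_iff, hi1]
          by_cases hx : h x = 0
          · simp [hx, Ne.symm h10, Ne.symm h10']
          · simp [hx, hx1 x hx]
        rw [heq]; exact hh.2 1 h10'
      · have heq : (fun x => if h x = 0 then (0 : Fin (n+2)) else 1) ⁻¹' {i} = ∅ := by
          ext x
          simp only [Set.mem_preimage, Set.mem_singleton_iff, Set.mem_empty_iff_false,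
            iff_false]
          by_cases hx : h x = 0 <;> simp [hx] <;> tauto
        rw [heq]; exact isCompact_empty
    · funext x
      simp only [hat]
      by_cases hx : h x = 0 <;> simp [hx, h10]
      exact (hx1 x hx).symm
  · intro f g
    funext x
    simp only [hat, pw]
    by_cases hf : f x = 0 <;> by_cases hg : g x = 0 <;> simp [hf, hg, h10]
  · intro f g
    funext x
    simp only [hat, pv]
    by_cases hf : f x = 0 <;> by_cases hg : g x = 0 <;> simp [hf, hg, h10]
  · intro f g
    funext x
    simp only [hat, pd]
    by_cases hf : f x = 0 <;> by_cases hg : g x = 0 <;> simp [hf, hg, h10]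
  · intro f g _ _
    constructor
    · intro hfg
      have key : ∀ x, f x = 0 ↔ g x = 0 := by
        intro x
        have := congrFun hfg x
        simp only [hat] at this
        by_cases hf : f x = 0 <;> by_cases hg : g x = 0 <;>
          simp [hf, hg, h10'] at this ⊢
      constructor
      · funext x
        simp only [pw]
        by_cases hf : f x = 0 <;> by_cases hg : g x = 0 <;> simp [hf, hg]
        exact absurd ((key x).mpr hg) hf
      · funext x
        simp only [pw]
        by_cases hf : f x = 0 <;> by_cases hg : g x = 0 <;> simp [hf, hg]
        exact absurd ((key x).mp hf) hg
    · rintro ⟨h1, h2⟩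
      funext x
      have e1 := congrFun h1 x
      have e2 := congrFun h2 x
      simp only [pw] at e1 e2
      simp only [hat]
      by_cases hf : f x = 0 <;> by_cases hg : g x = 0 <;> simp [hf, hg] at e1 e2 ⊢
      · exact hg (e2.symm)
      · exact hf (e1.symm)

end SkewPaper
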